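/- arXiv:2509.01823 — 2 statements merged into one kernel-verified Lean document; each statement's English description precedes it below -/
import Mathlib

section
/- The circulant graph Γ(n, ±{1,2}) on an odd number n ≥ 5 of vertices is not Fibonacci cordial: for every injective map f from its vertices into Fibonacci numbers, the induced edge-label counts satisfy |e_f(0) − e_f(1)| ≥ 2. -/
/-!
Summing `f u + f v` over the edges of a finite graph counts each vertex `v` with multiplicity
`deg v`, so this sum is `∑ v, deg v * f v`; when every degree is even it is even, hence so is the
number of edges with odd label `(f u + f v) % 2`. The circulant `Γ(n, ±{1,2})` is 4-regular with
`2n` edges, so `e_f(0) - e_f(1) = 2n - 2 e_f(1) ≡ 2n ≡ 2 (mod 4)` for odd `n`, which is never 0.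
-/

/-- The circulant graph `Γ(n, ±{1,...,j})` on `ℤ/nℤ`: `u ~ v` iff `v - u ≡ ±k (mod n)`
for some `1 ≤ k ≤ j`. -/
def circulant (n j : ℕ) : SimpleGraph (ZMod n) :=
  SimpleGraph.fromRel (fun u v => ∃ k : ℕ, 1 ≤ k ∧ k ≤ j ∧ v - u = (k : ZMod n))

/-- The induced edge label `(f u + f v) mod 2` on an edge of a graph. -/
def edgeLabelN {V : Type*} (f : V → ℕ) : Sym2 V → ℕ :=
  Sym2.lift ⟨fun u v => (f u + f v) % 2, fun u v => by simp [add_comm]⟩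

/-- The number of edges of `G` whose induced label under `f` is `i`. -/
noncomputable def eCountN {V : Type*} (G : SimpleGraph V) (f : V → ℕ) (i : ℕ) : ℕ :=
  {e ∈ G.edgeSet | edgeLabelN f e = i}.ncard

open Finset

def edgeSumN {V : Type*} (f : V → ℕ) : Sym2 V → ℕ :=
  Sym2.lift ⟨fun u v => f u + f v, fun _ _ => add_comm _ _⟩

theorem edgeLabelN_eq_edgeSumN_mod_two {V : Type*} (f : V → ℕ) (e : Sym2 V) :
    edgeLabelN f e = edgeSumN f e % 2 := by
  induction e using Sym2.ind
  rfl

namespace SimpleGraph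

variable {V : Type*} [Fintype V] (G : SimpleGraph V) [DecidableRel G.Adj]

theorem sum_dart_fst_eq_sum_degree_mul [DecidableEq V] (f : V → ℕ) :
    ∑ d : G.Dart, f d.fst = ∑ v, G.degree v * f v := by
  rw [← sum_fiberwise_of_maps_to (g := fun d : G.Dart => d.fst) (t := univ) (by simp)]
  refine sum_congr rfl fun v _ => ?_
  rw [sum_congr rfl fun d hd => by rw [(mem_filter.1 hd).2], sum_const,
    dart_fst_fiber_card_eq_degree, smul_eq_mul]

theorem sum_dart_edge_eq_two_mul_sum_edgeFinset [DecidableEq V] (g : Sym2 V → ℕ) :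
    ∑ d : G.Dart, g d.edge = 2 * ∑ e ∈ G.edgeFinset, g e := by
  rw [← sum_fiberwise_of_maps_to (g := Dart.edge) (t := G.edgeFinset)
    (fun d _ => mem_edgeFinset.2 d.edge_mem), mul_sum]
  refine sum_congr rfl fun e he => ?_
  rw [sum_congr rfl fun d hd => by rw [(mem_filter.1 hd).2], sum_const,
    dart_edge_fiber_card G e (mem_edgeFinset.1 he), smul_eq_mul]

theorem sum_edgeSumN_eq_sum_degree_mul (f : V → ℕ) :
    ∑ e ∈ G.edgeFinset, edgeSumN f e = ∑ v, G.degree v * f v := by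
  classical
  have hsnd : ∑ d : G.Dart, f d.snd = ∑ d : G.Dart, f d.fst :=
    Fintype.sum_equiv (Function.Involutive.toPerm _ Dart.symm_involutive) _ _ fun _ => rfl
  have hdart : ∑ d : G.Dart, edgeSumN f d.edge = 2 * ∑ d : G.Dart, f d.fst := by
    simp only [Dart.edge, edgeSumN, Sym2.lift_mk, sum_add_distrib, hsnd, two_mul]
  have hedge := G.sum_dart_edge_eq_two_mul_sum_edgeFinset (edgeSumN f)
  have hfst := G.sum_dart_fst_eq_sum_degree_mul f
  omega

theorem even_card_edgeLabelN_eq_one_of_even_degree (f : V → ℕ) (h : ∀ v, Even (G.degree v)) :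
    Even #{e ∈ G.edgeFinset | edgeLabelN f e = 1} := by
  have hsum : Even (∑ e ∈ G.edgeFinset, edgeSumN f e) := by
    rw [sum_edgeSumN_eq_sum_degree_mul]
    exact even_sum _ fun v _ => (h v).mul_right _
  rw [even_sum_iff_even_card_odd] at hsum
  simpa only [edgeLabelN_eq_edgeSumN_mod_two, Nat.odd_iff] using hsum

theorem IsRegularOfDegree.two_mul_card_edgeFinset {d : ℕ} (h : G.IsRegularOfDegree d) :
    2 * #G.edgeFinset = d * Fintype.card V := by
  rw [← sum_degrees_eq_twice_card_edges, sum_congr rfl fun v _ => h.degree_eq v, sum_const,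
    card_univ, smul_eq_mul, mul_comm]

end SimpleGraph

section EdgeCount

variable {V : Type*} [Fintype V] (G : SimpleGraph V) [DecidableRel G.Adj] (f : V → ℕ)

theorem eCountN_eq_card_filter (i : ℕ) :
    eCountN G f i = #{e ∈ G.edgeFinset | edgeLabelN f e = i} := by
  rw [eCountN, ← Set.ncard_coe_finset, coe_filter]
  simp only [SimpleGraph.mem_edgeFinset]

theorem eCountN_zero_add_eCountN_one : eCountN G f 0 + eCountN G f 1 = #G.edgeFinset := by
  have hne : ∀ e ∈ G.edgeFinset, ¬edgeLabelN f e = 0 ↔ edgeLabelN f e = 1 := fun e _ => by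
    rw [edgeLabelN_eq_edgeSumN_mod_two]
    omega
  rw [eCountN_eq_card_filter, eCountN_eq_card_filter, ← filter_congr hne,
    card_filter_add_card_filter_not]

end EdgeCount

theorem ZMod.natCast_ne_zero_of_pos_of_lt {n k : ℕ} (hk : 0 < k) (hkn : k < n) :
    (k : ZMod n) ≠ 0 := by
  rw [Ne, ZMod.natCast_eq_zero_iff]
  exact Nat.not_dvd_of_pos_of_lt hk hkn

theorem circulant_two_adj {n : ℕ} {u v : ZMod n} :
    (circulant n 2).Adj u v ↔ u ≠ v ∧ (v - u = 1 ∨ v - u = 2 ∨ u - v = 1 ∨ u - v = 2) := by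
  have hk (w : ZMod n) : (∃ k : ℕ, 1 ≤ k ∧ k ≤ 2 ∧ w = k) ↔ w = 1 ∨ w = 2 := by
    constructor
    · rintro ⟨k, hk1, hk2, rfl⟩
      interval_cases k <;> simp
    · rintro (rfl | rfl)
      exacts [⟨1, by simp⟩, ⟨2, by simp⟩]
  simp only [circulant, SimpleGraph.fromRel_adj, hk, or_assoc]

section Circulant

variable {n : ℕ} [NeZero n] [DecidableRel (circulant n 2).Adj]

theorem circulant_two_neighborFinset (hn : 5 ≤ n) (u : ZMod n) :
    (circulant n 2).neighborFinset u = {u + 1, u + 2, u - 1, u - 2} := by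
  have h1 : ((1 : ℕ) : ZMod n) ≠ 0 := ZMod.natCast_ne_zero_of_pos_of_lt (by omega) (by omega)
  have h2 : ((2 : ℕ) : ZMod n) ≠ 0 := ZMod.natCast_ne_zero_of_pos_of_lt (by omega) (by omega)
  push_cast at h1 h2
  ext v
  simp only [SimpleGraph.mem_neighborFinset, circulant_two_adj, mem_insert, mem_singleton]
  grind

theorem circulant_two_isRegularOfDegree (hn : 5 ≤ n) : (circulant n 2).IsRegularOfDegree 4 := by
  have hk (k : ℕ) (hk : 0 < k) (hk5 : k < 5) : (k : ZMod n) ≠ 0 :=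
    ZMod.natCast_ne_zero_of_pos_of_lt hk (by omega)
  have h1 := hk 1 (by omega) (by omega)
  have h2 := hk 2 (by omega) (by omega)
  have h3 := hk 3 (by omega) (by omega)
  have h4 := hk 4 (by omega) (by omega)
  push_cast at h1 h2 h3 h4
  intro u
  rw [← SimpleGraph.card_neighborFinset_eq_degree, circulant_two_neighborFinset hn,
    card_insert_of_notMem, card_insert_of_notMem, card_pair]
  all_goals
    simp only [mem_insert, mem_singleton, ne_eq, ← sub_eq_zero (b := u + 2),
      ← sub_eq_zero (b := u - 1), ← sub_eq_zero (b := u - 2)]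
    ring_nf
    simp [h1, h2, h3, h4]

end Circulant

/-- For odd `n ≥ 5`, the circulant graph `Γ(n, ±{1,2})` is not Fibonacci cordial: every
injective labeling of its vertices by Fibonacci numbers `F_0, ..., F_n` has edge-label
imbalance at least 2. -/
theorem circulant_n2_odd_not_fibonacci_cordial (n : ℕ) (hn : 5 ≤ n) (hodd : Odd n) :
    ∀ f : ZMod n → ℕ, Function.Injective f → (∀ v, ∃ k ≤ n, f v = Nat.fib k) →
      2 ≤ |(eCountN (circulant n 2) f 0 : ℤ) - (eCountN (circulant n 2) f 1 : ℤ)| := by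
  intro f _ _
  have : NeZero n := ⟨by omega⟩
  classical
  have hreg := circulant_two_isRegularOfDegree hn
  have hedges := hreg.two_mul_card_edgeFinset
  have htotal := eCountN_zero_add_eCountN_one (circulant n 2) f
  obtain ⟨k, hk⟩ : Even (eCountN (circulant n 2) f 1) := by
    rw [eCountN_eq_card_filter]
    exact SimpleGraph.even_card_edgeLabelN_eq_one_of_even_degree _ f fun v =>
      hreg.degree_eq v ▸ even_two_mul 2
  obtain ⟨m, rfl⟩ := hodd
  rw [ZMod.card] at hedges
  rw [le_abs]
  omega
end

section
/- For a 2j-regular graph G, the imbalance e_f(0) − e_f(1) of any ℤ-valued vertex labeling f is congruent modulo 4 to the imbalance of the constant-zero labeling, which equals |E(G)| = n·j; hence if n·j ≡ 2 (mod 4) then no labeling achieves |e_f(0) − e_f(1)| ≤ 1. -/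
/-- The induced edge label `(f u + f v) mod 2` on an edge of a graph. -/
def edgeLabel {V : Type*} (f : V → ℤ) : Sym2 V → ℤ :=
  Sym2.lift ⟨fun u v => (f u + f v) % 2, fun u v => by simp [add_comm]⟩

/-- The number of edges of `G` whose induced label under `f` is `i`. -/
noncomputable def eCount {V : Type*} (G : SimpleGraph V) (f : V → ℤ) (i : ℤ) : ℕ :=
  {e ∈ G.edgeSet | edgeLabel f e = i}.ncard

/-!
Every edge label is 0 or 1, so `e_f(0) + e_f(1) = |E|` and `e_f(0) - e_f(1) = |E| - 2 e_f(1)`.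
Modulo 2, `e_f(1)` is the sum over the edges `uv` of `f u + f v`, that is `∑ v, deg v • f v`,
which vanishes when all degrees are even. Hence `e_f(1)` is even and `e_f(0) - e_f(1) ≡ |E|`
modulo 4, while the constant-zero labeling has imbalance exactly `|E|`, which handshaking
computes as `n j` for a `2j`-regular graph.
-/

open Finset

namespace SimpleGraph

variable {V : Type*} [Fintype V] (G : SimpleGraph V) [DecidableRel G.Adj]
  {M : Type*} [AddCommMonoid M]

theorem ncard_neighborSet_eq_degree (v : V) : (G.neighborSet v).ncard = G.degree v := by
  rw [← card_neighborSet_eq_degree, ← Nat.card_eq_fintype_card, Nat.card_coe_set_eq]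

theorem sum_darts_fst (g : V → M) : ∑ d : G.Dart, g d.fst = ∑ v, G.degree v • g v := by
  classical
  rw [← sum_fiberwise univ (fun d : G.Dart => d.fst)]
  refine sum_congr rfl fun v _ => ?_
  rw [sum_congr rfl fun d hd => by rw [(mem_filter.1 hd).2], sum_const,
    ← dart_fst_fiber_card_eq_degree]

theorem sum_darts_fst_eq_sum_edgeFinset (g : V → M) :
    ∑ d : G.Dart, g d.fst =
      ∑ e ∈ G.edgeFinset, Sym2.lift ⟨fun u v => g u + g v, fun _ _ => add_comm _ _⟩ e := by
  classical
  rw [← sum_fiberwise_of_maps_to (t := G.edgeFinset) (g := Dart.edge)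
    fun d _ => mem_edgeFinset.2 d.edge_mem]
  refine sum_congr rfl fun e he => ?_
  induction e using Sym2.ind with
  | _ u v =>
    let d : G.Dart := ⟨(u, v), mem_edgeFinset.1 he⟩
    rw [show s(u, v) = d.edge from rfl, d.edge_fiber, sum_pair d.symm_ne.symm]
    rfl

theorem IsRegularOfDegree.two_mul_ncard_edgeSet {d : ℕ} (h : G.IsRegularOfDegree d) :
    2 * G.edgeSet.ncard = Fintype.card V * d := by
  rw [← coe_edgeFinset, Set.ncard_coe_finset, ← sum_degrees_eq_twice_card_edges,
    sum_congr rfl fun v _ => h.degree_eq v, sum_const, card_univ, smul_eq_mul]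

end SimpleGraph

section

variable {V : Type*}

theorem edgeLabel_eq_zero_or_one (f : V → ℤ) (e : Sym2 V) :
    edgeLabel f e = 0 ∨ edgeLabel f e = 1 := by
  induction e using Sym2.ind with
  | _ u v => exact Int.emod_two_eq (f u + f v)

theorem intCast_edgeLabel (f : V → ℤ) (e : Sym2 V) :
    ((edgeLabel f e : ℤ) : ZMod 2) =
      Sym2.lift ⟨fun u v => (f u : ZMod 2) + f v, fun _ _ => add_comm _ _⟩ e := by
  induction e using Sym2.ind with
  | _ u v => simpa [edgeLabel] using ZMod.intCast_mod (f u + f v) 2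

theorem edgeLabel_const_zero (e : Sym2 V) : edgeLabel (fun _ : V => (0 : ℤ)) e = 0 := by
  induction e using Sym2.ind with
  | _ u v => rfl

variable (G : SimpleGraph V)

theorem eCount_const_zero_zero : eCount G (fun _ => 0) 0 = G.edgeSet.ncard := by
  simp [eCount, edgeLabel_const_zero]

theorem eCount_const_zero_one : eCount G (fun _ => 0) 1 = 0 := by
  simp [eCount, edgeLabel_const_zero]

theorem eCount_zero_add_eCount_one [Finite V] (f : V → ℤ) :
    eCount G f 0 + eCount G f 1 = G.edgeSet.ncard := by
  have hone : {e ∈ G.edgeSet | edgeLabel f e = 1} = G.edgeSet \ {e | edgeLabel f e = 0} := by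
    ext e
    rcases edgeLabel_eq_zero_or_one f e with h | h <;> simp [h]
  rw [eCount, eCount, hone]
  exact Set.ncard_inter_add_ncard_sdiff_eq_ncard _ _ G.edgeSet.toFinite

theorem eCount_eq_card_filter [Fintype V] [DecidableRel G.Adj] (f : V → ℤ) (i : ℤ) :
    eCount G f i = #{e ∈ G.edgeFinset | edgeLabel f e = i} := by
  rw [eCount, ← Set.ncard_coe_finset, coe_filter]
  simp only [SimpleGraph.mem_edgeFinset]

theorem even_eCount_one [Fintype V] [DecidableRel G.Adj] (hG : ∀ v, Even (G.degree v))
    (f : V → ℤ) : Even (eCount G f 1) := by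
  rw [← ZMod.natCast_eq_zero_iff_even]
  calc ((eCount G f 1 : ℕ) : ZMod 2)
      = ∑ e ∈ G.edgeFinset, ((edgeLabel f e : ℤ) : ZMod 2) := by
        rw [eCount_eq_card_filter, natCast_card_filter]
        refine sum_congr rfl fun e _ => ?_
        rcases edgeLabel_eq_zero_or_one f e with h | h <;> simp [h]
    _ = ∑ v, G.degree v • (f v : ZMod 2) := by
        simp_rw [intCast_edgeLabel]
        rw [← G.sum_darts_fst_eq_sum_edgeFinset, G.sum_darts_fst (fun v => (f v : ZMod 2))]
    _ = 0 := sum_eq_zero fun v _ => by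
        rw [nsmul_eq_mul, ZMod.natCast_eq_zero_iff_even.2 (hG v), zero_mul]

theorem eCount_sub_modEq_ncard_edgeSet [Fintype V] [DecidableRel G.Adj]
    (hG : ∀ v, Even (G.degree v)) (f : V → ℤ) :
    (eCount G f 0 : ℤ) - eCount G f 1 ≡ G.edgeSet.ncard [ZMOD 4] := by
  obtain ⟨k, hk⟩ := even_eCount_one G hG f
  have hsum := eCount_zero_add_eCount_one G f
  unfold Int.ModEq
  omega

end

/-- For a `2j`-regular graph `G` on `n` vertices: the imbalance of every labeling is
congruent mod 4 to that of the constant-zero labeling, which equals `|E(G)| = n·j`;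
hence if `n·j ≡ 2 (mod 4)` no labeling achieves imbalance at most 1. -/
theorem regular_imbalance_mod_four {V : Type*} [Fintype V] (G : SimpleGraph V) (n j : ℕ)
    (hcard : Fintype.card V = n)
    (hreg : ∀ v : V, (G.neighborSet v).ncard = 2 * j) :
    (∀ f : V → ℤ,
      ((eCount G f 0 : ℤ) - (eCount G f 1 : ℤ)) ≡
        ((eCount G (fun _ => 0) 0 : ℤ) - (eCount G (fun _ => 0) 1 : ℤ)) [ZMOD 4]) ∧
    ((eCount G (fun _ => 0) 0 : ℤ) - (eCount G (fun _ => 0) 1 : ℤ) = (n * j : ℕ)) ∧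
    G.edgeSet.ncard = n * j ∧
    ((n * j) % 4 = 2 →
      ∀ f : V → ℤ, ¬ (|(eCount G f 0 : ℤ) - (eCount G f 1 : ℤ)| ≤ 1)) := by
  classical
  have hregular : G.IsRegularOfDegree (2 * j) := fun v => by
    rw [← G.ncard_neighborSet_eq_degree, hreg]
  have hedges : G.edgeSet.ncard = n * j := by
    have := hregular.two_mul_ncard_edgeSet
    rw [hcard] at this
    linarith
  have hzero : (eCount G (fun _ => 0) 0 : ℤ) - eCount G (fun _ => 0) 1 = (n * j : ℕ) := by
    rw [eCount_const_zero_zero, eCount_const_zero_one, hedges, Nat.cast_zero, sub_zero]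
  have hmod (f : V → ℤ) : (eCount G f 0 : ℤ) - eCount G f 1 ≡ (n * j : ℕ) [ZMOD 4] :=
    hedges ▸ eCount_sub_modEq_ncard_edgeSet G (fun v => hregular.degree_eq v ▸ even_two_mul j) f
  refine ⟨fun f => hzero ▸ hmod f, hzero, hedges, fun hnj f hle => ?_⟩
  have := hmod f
  unfold Int.ModEq at this
  rw [abs_le] at hle
  omega
end
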